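/- arXiv:2205.10080 — 4 statements merged into one kernel-verified Lean document; each statement's English description precedes it below -/
import Mathlib

section
/- Let k be a natural number, let x_i < x1s < x_{i+1} be real numbers with h = x_{i+1} − x_i and h1p = x_{i+1} − x1s, let l > 0 and y_{j+1} = y_j + l. Let u⁻, u⁺ : ℝ² → ℝ be of class C^{k+1}. Suppose K is a constant with |∂_x^{k+1} u⁻(x, y_{j+1})| ≤ K and |∂_x^{k+1} u⁺(x, y_{j+1})| ≤ K for all x ∈ [x_i, x_{i+1}], and M is a constant with |∂_x^{p} ∂_y^{q} u⁻(x,y)| ≤ M for all (x,y) ∈ [x_i, x_{i+1}] × [y_j, y_{j+1}] and all p, q ≥ 0 with p + q = k + 1. Then |u⁺(x_{i+1}, y_{j+1}) − Σ_{p=0}^{k} Σ_{q=0}^{k−p} (h^p l^q)/(p! q!) · ∂_x^p ∂_y^q u⁻(x_i, y_j) − Σ_{r=0}^{k} (h1p)^r / r! · (∂_x^r u⁺(x1s, y_{j+1}) − ∂_x^r u⁻(x1s, y_{j+1}))| ≤ 2K h^{k+1}/(k+1)! + M (h + l)^{k+1}/(k+1)!. -/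
/-!
Split the left-hand side as `(u⁺ - T⁺) - (u⁻ - T⁻) + (u⁻ - T₂)`, where `T±` are the Taylor
polynomials of `x ↦ u±(x, y_{j+1})` at `x1s` (their difference is the jump sum) and `T₂` is the
two-dimensional Taylor polynomial of `u⁻` at `(x_i, y_j)`. The first two are Lagrange remainders
on `[x1s, x_{i+1}]`, bounded by `K h1p^{k+1}/(k+1)! ≤ K h^{k+1}/(k+1)!`. The third is the Lagrange
remainder on `[0, 1]` of `t ↦ u⁻((x_i, y_j) + t (h, l))`, whose `n`-th derivative is
`∑ C(n, p) h^p l^q ∂_x^p ∂_y^q u⁻` (`p + q = n`) by symmetry of second derivatives; at order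
`k + 1` it is bounded by `M (h + l)^{k+1}`.
-/

open Set Finset

section DirDeriv

variable {E F : Type*} [NormedAddCommGroup E] [NormedSpace ℝ E]
  [NormedAddCommGroup F] [NormedSpace ℝ F]

noncomputable def dirDeriv (v : E) (U : E → F) : E → F := fun z => fderiv ℝ U z v

theorem contDiff_dirDeriv {U : E → F} {m : ℕ} (hU : ContDiff ℝ (m + 1) U) (v : E) :
    ContDiff ℝ m (dirDeriv v U) :=
  (ContinuousLinearMap.apply ℝ F v).contDiff.comp (hU.fderiv_right le_rfl)

theorem contDiff_iterate_dirDeriv {U : E → F} {m q : ℕ} (hU : ContDiff ℝ (m + q) U) (v : E) :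
    ContDiff ℝ m ((dirDeriv v)^[q] U) := by
  induction q generalizing U with
  | zero => simpa using hU
  | succ q ih =>
    rw [Function.iterate_succ_apply]
    exact ih (contDiff_dirDeriv (by simpa [add_assoc] using hU) v)

theorem dirDeriv_comm {U : E → F} (hU : ContDiff ℝ 2 U) (v w : E) :
    dirDeriv v (dirDeriv w U) = dirDeriv w (dirDeriv v U) := by
  have hfd : Differentiable ℝ (fderiv ℝ U) :=
    (hU.fderiv_right one_add_one_eq_two.le).differentiable one_ne_zero
  have hsecond : ∀ a b z, dirDeriv a (dirDeriv b U) z = fderiv ℝ (fderiv ℝ U) z a b :=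
    fun a b z => by
      rw [dirDeriv, show dirDeriv b U = ContinuousLinearMap.apply ℝ F b ∘ fderiv ℝ U from rfl,
        ((ContinuousLinearMap.apply ℝ F b).hasFDerivAt.comp z (hfd z).hasFDerivAt).fderiv]
      rfl
  funext z
  rw [hsecond, hsecond,
    hU.contDiffAt.isSymmSndFDerivAt (by simp [minSmoothness_of_isRCLikeNormedField]) v w]

theorem dirDeriv_iterate_comm {U : E → F} {p : ℕ} (hU : ContDiff ℝ (p + 1) U) (v w : E) :
    dirDeriv w ((dirDeriv v)^[p] U) = (dirDeriv v)^[p] (dirDeriv w U) := by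
  induction p generalizing U with
  | zero => rfl
  | succ p ih =>
    have hU' : ContDiff ℝ (p + 1) (dirDeriv v U) := contDiff_dirDeriv (by exact_mod_cast hU) v
    rw [Function.iterate_succ_apply, ih hU',
      dirDeriv_comm (hU.of_le (by norm_cast; omega)) w v, ← Function.iterate_succ_apply]

theorem hasDerivAt_comp_line {U : E → F} {c v : E} {t : ℝ}
    (hU : DifferentiableAt ℝ U (c + t • v)) :
    HasDerivAt (fun s : ℝ => U (c + s • v)) (dirDeriv v U (c + t • v)) t := by
  have hline : HasDerivAt (fun s : ℝ => c + s • v) v t := by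
    simpa using ((hasDerivAt_id t).smul_const v).const_add c
  exact hU.hasFDerivAt.comp_hasDerivAt t hline

theorem iteratedDeriv_comp_line {U : E → F} {n : ℕ} (hU : ContDiff ℝ n U) (c v : E) :
    iteratedDeriv n (fun s : ℝ => U (c + s • v))
      = fun t => (dirDeriv v)^[n] U (c + t • v) := by
  induction n generalizing U with
  | zero => rfl
  | succ n ih =>
    have hderiv : deriv (fun s : ℝ => U (c + s • v)) = fun t => dirDeriv v U (c + t • v) :=
      funext fun t => (hasDerivAt_comp_line (hU.differentiable (by simp) _)).deriv
    rw [iteratedDeriv_succ', hderiv, ih (contDiff_dirDeriv (by exact_mod_cast hU) v)]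
    rfl

end DirDeriv

noncomputable def mixedPartial (p q : ℕ) (U : ℝ × ℝ → ℝ) : ℝ × ℝ → ℝ :=
  (dirDeriv ((1 : ℝ), (0 : ℝ)))^[p] ((dirDeriv ((0 : ℝ), (1 : ℝ)))^[q] U)

theorem iteratedDeriv_slice_fst {U : ℝ × ℝ → ℝ} {n : ℕ} (hU : ContDiff ℝ n U) (x y : ℝ) :
    iteratedDeriv n (fun x' => U (x', y)) x = (dirDeriv ((1 : ℝ), (0 : ℝ)))^[n] U (x, y) := by
  simpa using congrFun (iteratedDeriv_comp_line hU ((0 : ℝ), y) ((1 : ℝ), (0 : ℝ))) x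

theorem iteratedDeriv_slice_snd {U : ℝ × ℝ → ℝ} {n : ℕ} (hU : ContDiff ℝ n U) (x y : ℝ) :
    iteratedDeriv n (fun y' => U (x, y')) y = (dirDeriv ((0 : ℝ), (1 : ℝ)))^[n] U (x, y) := by
  simpa using congrFun (iteratedDeriv_comp_line hU (x, (0 : ℝ)) ((0 : ℝ), (1 : ℝ))) y

theorem mixedPartial_eq_iteratedDeriv {u : ℝ → ℝ → ℝ} {p q : ℕ}
    (hu : ContDiff ℝ (p + q) (fun z : ℝ × ℝ => u z.1 z.2)) (z : ℝ × ℝ) :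
    mixedPartial p q (fun z => u z.1 z.2) z
      = iteratedDeriv p (fun x => iteratedDeriv q (fun y => u x y) z.2) z.1 := by
  have hinner : (fun x => iteratedDeriv q (fun y => u x y) z.2)
      = fun x => (dirDeriv ((0 : ℝ), (1 : ℝ)))^[q] (fun z => u z.1 z.2) (x, z.2) :=
    funext fun x => iteratedDeriv_slice_snd (hu.of_le (by simp)) x z.2
  rw [hinner, iteratedDeriv_slice_fst (contDiff_iterate_dirDeriv hu _)]
  rfl

theorem dirDeriv_prod (U : ℝ × ℝ → ℝ) (v z : ℝ × ℝ) :
    dirDeriv v U z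
      = v.1 * dirDeriv ((1 : ℝ), (0 : ℝ)) U z + v.2 * dirDeriv ((0 : ℝ), (1 : ℝ)) U z := by
  have hv : v = v.1 • ((1 : ℝ), (0 : ℝ)) + v.2 • ((0 : ℝ), (1 : ℝ)) := by ext <;> simp
  rw [dirDeriv, dirDeriv, dirDeriv]
  conv_lhs => rw [hv]
  rw [map_add, map_smul, map_smul, smul_eq_mul, smul_eq_mul]

theorem dirDeriv_mixedPartial {U : ℝ × ℝ → ℝ} {p q : ℕ} (hU : ContDiff ℝ (p + 1 + q) U)
    (v z : ℝ × ℝ) :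
    dirDeriv v (mixedPartial p q U) z
      = v.1 * mixedPartial (p + 1) q U z + v.2 * mixedPartial p (q + 1) U z := by
  rw [dirDeriv_prod]
  simp only [mixedPartial, Function.iterate_succ_apply']
  rw [dirDeriv_iterate_comm (contDiff_iterate_dirDeriv hU _) ((1 : ℝ), (0 : ℝ))
    ((0 : ℝ), (1 : ℝ))]

theorem iteratedDeriv_comp_line_eq_sum {U : ℝ × ℝ → ℝ} {n : ℕ} (hU : ContDiff ℝ n U)
    (c v : ℝ × ℝ) (t : ℝ) :
    iteratedDeriv n (fun s : ℝ => U (c + s • v)) t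
      = ∑ ij ∈ antidiagonal n, (n.choose ij.1 : ℝ) *
          (v.1 ^ ij.1 * v.2 ^ ij.2 * mixedPartial ij.1 ij.2 U (c + t • v)) := by
  induction n generalizing t with
  | zero => simp [mixedPartial]
  | succ n ih =>
    have hterm : ∀ ij ∈ antidiagonal n, HasDerivAt
        (fun s : ℝ => (n.choose ij.1 : ℝ) *
          (v.1 ^ ij.1 * v.2 ^ ij.2 * mixedPartial ij.1 ij.2 U (c + s • v)))
        ((n.choose ij.1 : ℝ) * (v.1 ^ ij.1 * v.2 ^ ij.2 *
          (v.1 * mixedPartial (ij.1 + 1) ij.2 U (c + t • v)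
            + v.2 * mixedPartial ij.1 (ij.2 + 1) U (c + t • v)))) t := by
      rintro ⟨i, j⟩ hij
      have hij : i + j = n := mem_antidiagonal.mp hij
      have hUij : ContDiff ℝ (i + 1 + j) U := hU.of_le (by norm_cast; omega)
      have hdiff : Differentiable ℝ (mixedPartial i j U) :=
        (contDiff_iterate_dirDeriv (m := 1) (contDiff_iterate_dirDeriv
          (by simpa [add_comm] using hUij) _) _).differentiable one_ne_zero
      have h := hasDerivAt_comp_line (c := c) (v := v) (t := t) (hdiff _)
      rw [dirDeriv_mixedPartial hUij] at h
      exact (h.const_mul _).const_mul _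
    rw [iteratedDeriv_succ, funext (ih (hU.of_le (by norm_cast; omega))),
      (HasDerivAt.fun_sum hterm).deriv,
      sum_antidiagonal_choose_succ_mul
        (fun i j => v.1 ^ i * v.2 ^ j * mixedPartial i j U (c + t • v)), ← sum_add_distrib]
    refine sum_congr rfl fun ij hij => ?_
    rw [← Nat.choose_symm_of_eq_add (mem_antidiagonal.mp hij).symm]
    ring

theorem iteratedDeriv_comp_line_div_factorial {U : ℝ × ℝ → ℝ} {n : ℕ} (hU : ContDiff ℝ n U)
    (c v : ℝ × ℝ) (t : ℝ) :
    iteratedDeriv n (fun s : ℝ => U (c + s • v)) t / n.factorial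
      = ∑ ij ∈ antidiagonal n, v.1 ^ ij.1 * v.2 ^ ij.2
          / (ij.1.factorial * ij.2.factorial) * mixedPartial ij.1 ij.2 U (c + t • v) := by
  rw [iteratedDeriv_comp_line_eq_sum hU, sum_div]
  refine sum_congr rfl fun ij hij => ?_
  obtain rfl := mem_antidiagonal.mp hij
  rw [Nat.cast_add_choose]
  field_simp

theorem abs_sum_antidiagonal_choose_mul_le {n : ℕ} {x y M : ℝ} {D : ℕ → ℕ → ℝ}
    (hx : 0 ≤ x) (hy : 0 ≤ y) (hD : ∀ ij ∈ antidiagonal n, |D ij.1 ij.2| ≤ M) :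
    |∑ ij ∈ antidiagonal n, (n.choose ij.1 : ℝ) * (x ^ ij.1 * y ^ ij.2 * D ij.1 ij.2)|
      ≤ M * (x + y) ^ n := by
  calc _ ≤ ∑ ij ∈ antidiagonal n, |(n.choose ij.1 : ℝ) * (x ^ ij.1 * y ^ ij.2 * D ij.1 ij.2)| :=
        abs_sum_le_sum_abs _ _
    _ ≤ ∑ ij ∈ antidiagonal n, (n.choose ij.1 : ℝ) * (x ^ ij.1 * y ^ ij.2) * M := by
        refine sum_le_sum fun ij hij => ?_
        rw [abs_mul, abs_mul, abs_of_nonneg (by positivity), abs_of_nonneg (by positivity),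
          ← mul_assoc]
        exact mul_le_mul_of_nonneg_left (hD ij hij) (by positivity)
    _ = M * (x + y) ^ n := by
        rw [(Commute.all x y).add_pow', mul_comm, sum_mul]
        simp only [nsmul_eq_mul]

theorem sum_range_sum_antidiagonal {M : Type*} [AddCommMonoid M] (k : ℕ) (f : ℕ × ℕ → M) :
    ∑ n ∈ range (k + 1), ∑ ij ∈ antidiagonal n, f ij
      = ∑ p ∈ range (k + 1), ∑ q ∈ range (k - p + 1), f (p, q) := by
  rw [sum_congr rfl fun n _ => Nat.sum_antidiagonal_eq_sum_range_succ_mk f n,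
    sum_range_diag_flip (k + 1) fun p q => f (p, q)]
  refine sum_congr rfl fun p hp => ?_
  rw [show k + 1 - p = k - p + 1 by have := mem_range.mp hp; omega]

theorem abs_sub_taylor_sum_le {f : ℝ → ℝ} {k : ℕ} (hf : ContDiff ℝ (k + 1) f) {a b C : ℝ}
    (hab : a < b) (hC : ∀ x ∈ Icc a b, |iteratedDeriv (k + 1) f x| ≤ C) :
    |f b - ∑ r ∈ range (k + 1), (b - a) ^ r / r.factorial * iteratedDeriv r f a|
      ≤ C * (b - a) ^ (k + 1) / (k + 1).factorial := by
  obtain ⟨x, hx, hrem⟩ := taylor_mean_remainder_lagrange_iteratedDeriv hab.ne hf.contDiffOn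
  have hpoly : taylorWithinEval f k (uIcc a b) a b
      = ∑ r ∈ range (k + 1), (b - a) ^ r / r.factorial * iteratedDeriv r f a := by
    rw [taylor_within_apply]
    refine sum_congr rfl fun r hr => ?_
    rw [iteratedDerivWithin_eq_iteratedDeriv (uniqueDiffOn_uIcc hab.ne)
      (hf.contDiffAt.of_le (by have := mem_range.mp hr; norm_cast; omega)) left_mem_uIcc,
      smul_eq_mul]
    ring
  rw [uIoo_of_le hab.le] at hx
  rw [← hpoly, hrem, abs_div, abs_mul, abs_of_pos (pow_pos (sub_pos.2 hab) _), Nat.abs_cast]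
  gcongr
  exact hC x (Ioo_subset_Icc_self hx)

theorem abs_sub_taylor_sum_two_le {u : ℝ → ℝ → ℝ} {k : ℕ}
    (hu : ContDiff ℝ (k + 1) (fun z : ℝ × ℝ => u z.1 z.2)) {a b c d M : ℝ}
    (hab : a ≤ b) (hcd : c ≤ d)
    (hM : ∀ p q : ℕ, p + q = k + 1 → ∀ x ∈ Icc a b, ∀ y ∈ Icc c d,
      |iteratedDeriv p (fun x' => iteratedDeriv q (fun y' => u x' y') y) x| ≤ M) :
    |u b d - ∑ p ∈ range (k + 1), ∑ q ∈ range (k - p + 1),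
        ((b - a) ^ p * (d - c) ^ q) / (p.factorial * q.factorial) *
          iteratedDeriv p (fun x' => iteratedDeriv q (fun y' => u x' y') c) a|
      ≤ M * ((b - a) + (d - c)) ^ (k + 1) / (k + 1).factorial := by
  set U : ℝ × ℝ → ℝ := fun z => u z.1 z.2
  set v : ℝ × ℝ := (b - a, d - c)
  have hmem : ∀ t ∈ Icc (0 : ℝ) 1,
      ((a, c) + t • v).1 ∈ Icc a b ∧ ((a, c) + t • v).2 ∈ Icc c d := by
    rintro t ⟨ht0, ht1⟩
    simp only [v, Prod.fst_add, Prod.snd_add, Prod.smul_fst, Prod.smul_snd, smul_eq_mul,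
      Set.mem_Icc]
    constructor <;> constructor <;> nlinarith
  have hbound : ∀ t ∈ Icc (0 : ℝ) 1,
      |iteratedDeriv (k + 1) (fun s : ℝ => U ((a, c) + s • v)) t|
        ≤ M * ((b - a) + (d - c)) ^ (k + 1) := by
    intro t ht
    rw [iteratedDeriv_comp_line_eq_sum (n := k + 1) (by exact_mod_cast hu)]
    refine abs_sum_antidiagonal_choose_mul_le
      (D := fun i j => mixedPartial i j U ((a, c) + t • v))
      (sub_nonneg.2 hab) (sub_nonneg.2 hcd) fun ij hij => ?_
    have hij : ij.1 + ij.2 = k + 1 := mem_antidiagonal.mp hij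
    rw [mixedPartial_eq_iteratedDeriv (hu.of_le (by norm_cast; omega))]
    exact hM _ _ hij _ (hmem t ht).1 _ (hmem t ht).2
  have hcoeff : ∀ n ≤ k, (1 - 0 : ℝ) ^ n / n.factorial
        * iteratedDeriv n (fun s : ℝ => U ((a, c) + s • v)) 0
      = ∑ ij ∈ antidiagonal n,
          ((b - a) ^ ij.1 * (d - c) ^ ij.2) / (ij.1.factorial * ij.2.factorial)
            * iteratedDeriv ij.1 (fun x' => iteratedDeriv ij.2 (fun y' => u x' y') c) a := by
    intro n hn
    rw [sub_zero, one_pow, one_div_mul_eq_div,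
      iteratedDeriv_comp_line_div_factorial (hu.of_le (by norm_cast; omega))]
    refine sum_congr rfl fun ij hij => ?_
    have hij : ij.1 + ij.2 = n := mem_antidiagonal.mp hij
    rw [mixedPartial_eq_iteratedDeriv (hu.of_le (by norm_cast; omega))]
    simp [v]
  have hline : ContDiff ℝ (k + 1) (fun s : ℝ => U ((a, c) + s • v)) :=
    hu.comp (contDiff_const.add (contDiff_id.smul contDiff_const))
  have htaylor := abs_sub_taylor_sum_le hline zero_lt_one hbound
  rw [sum_congr rfl fun n hn => hcoeff n (Nat.lt_add_one_iff.mp (mem_range.mp hn)),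
    sum_range_sum_antidiagonal] at htaylor
  simpa [U, v] using htaylor

/-- Lemma 1: jump-corrected two-dimensional Taylor expansion for an irregular point
whose grid line parallel to the x-axis crosses the interface at `(x1s, yjp1)`. -/
theorem jump_corrected_taylor_x
    (k : ℕ) (xi x1s xip1 : ℝ) (hx1 : xi < x1s) (hx2 : x1s < xip1)
    (h : ℝ) (hh : h = xip1 - xi)
    (h1p : ℝ) (hh1p : h1p = xip1 - x1s)
    (l : ℝ) (hl : 0 < l) (yj yjp1 : ℝ) (hy : yjp1 = yj + l)
    (um up : ℝ → ℝ → ℝ)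
    (hum : ContDiff ℝ (k + 1) (fun q : ℝ × ℝ => um q.1 q.2))
    (hup : ContDiff ℝ (k + 1) (fun q : ℝ × ℝ => up q.1 q.2))
    (K M : ℝ)
    (hKm : ∀ x ∈ Set.Icc xi xip1,
      |iteratedDeriv (k + 1) (fun x' => um x' yjp1) x| ≤ K)
    (hKp : ∀ x ∈ Set.Icc xi xip1,
      |iteratedDeriv (k + 1) (fun x' => up x' yjp1) x| ≤ K)
    (hM : ∀ p q : ℕ, p + q = k + 1 → ∀ x ∈ Set.Icc xi xip1, ∀ y ∈ Set.Icc yj yjp1,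
      |iteratedDeriv p (fun x' => iteratedDeriv q (fun y' => um x' y') y) x| ≤ M) :
    |up xip1 yjp1
      - ∑ p ∈ Finset.range (k + 1), ∑ q ∈ Finset.range (k - p + 1),
          (h ^ p * l ^ q) / ((p.factorial : ℝ) * (q.factorial : ℝ)) *
            iteratedDeriv p (fun x' => iteratedDeriv q (fun y' => um x' y') yj) xi
      - ∑ r ∈ Finset.range (k + 1),
          h1p ^ r / (r.factorial : ℝ) *
            (iteratedDeriv r (fun x' => up x' yjp1) x1s
              - iteratedDeriv r (fun x' => um x' yjp1) x1s)|
    ≤ 2 * K * h ^ (k + 1) / ((k + 1).factorial : ℝ)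
      + M * (h + l) ^ (k + 1) / ((k + 1).factorial : ℝ) := by
  subst hh hh1p hy
  have hsub : Icc x1s xip1 ⊆ Icc xi xip1 := Icc_subset_Icc_left hx1.le
  have hplus := abs_sub_taylor_sum_le (f := fun x => up x (yj + l))
    (hup.comp (contDiff_id.prodMk contDiff_const)) hx2 fun x hx => hKp x (hsub hx)
  have hminus := abs_sub_taylor_sum_le (f := fun x => um x (yj + l))
    (hum.comp (contDiff_id.prodMk contDiff_const)) hx2 fun x hx => hKm x (hsub hx)
  have hsmooth := abs_sub_taylor_sum_two_le hum (hx1.trans hx2).le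
    (le_add_of_nonneg_right hl.le) hM
  rw [add_sub_cancel_left] at hsmooth
  have hshorter : K * (xip1 - x1s) ^ (k + 1) / (k + 1).factorial
      ≤ K * (xip1 - xi) ^ (k + 1) / (k + 1).factorial := by
    have hK : 0 ≤ K := (abs_nonneg _).trans (hKp xip1 ⟨(hx1.trans hx2).le, le_rfl⟩)
    gcongr
  have hdouble : 2 * K * (xip1 - xi) ^ (k + 1) / (k + 1).factorial
      = K * (xip1 - xi) ^ (k + 1) / (k + 1).factorial
        + K * (xip1 - xi) ^ (k + 1) / (k + 1).factorial := by
    ring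
  simp only [mul_sub, sum_sub_distrib]
  rw [abs_le] at hplus hminus hsmooth ⊢
  constructor <;> linarith [hplus.1, hplus.2, hminus.1, hminus.2, hsmooth.1, hsmooth.2]
end

section
/- Let k be a natural number, let x_i < xs < x_{i+1} be real numbers with h = x_{i+1} − x_i and hp = x_{i+1} − xs. Let u⁻, u⁺ : ℝ → ℝ be of class C^{k+1}, and let K be a constant with |(u⁻)^{(k+1)}(x)| ≤ K and |(u⁺)^{(k+1)}(x)| ≤ K for all x ∈ [x_i, x_{i+1}]. Then |u⁺(x_{i+1}) − Σ_{p=0}^{k} h^p/p! · (u⁻)^{(p)}(x_i) − Σ_{r=0}^{k} (hp)^r/r! · ((u⁺)^{(r)}(xs) − (u⁻)^{(r)}(xs))| ≤ 3K h^{k+1}/(k+1)!. -/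
/-!
Adding and subtracting `u⁻(x_{i+1})` writes the expression as
`(u⁺(x_{i+1}) - T⁺) - (u⁻(x_{i+1}) - T⁻) + (u⁻(x_{i+1}) - T)`, where `T⁺`, `T⁻` are the Taylor
polynomials of `u⁺`, `u⁻` at `xs` and `T` that of `u⁻` at `x_i`, all evaluated at `x_{i+1}`.
By the Lagrange form of the remainder each bracket is at most `K h^{k+1}/(k+1)!`, as `hp ≤ h`.
-/

open Set Nat

theorem taylorWithinEval_eq_sum_iteratedDeriv {f : ℝ → ℝ} {n : ℕ} (hf : ContDiff ℝ n f)
    {s : Set ℝ} (hs : UniqueDiffOn ℝ s) {x₀ : ℝ} (hx₀ : x₀ ∈ s) (x : ℝ) :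
    taylorWithinEval f n s x₀ x =
      ∑ i ∈ Finset.range (n + 1), (x - x₀) ^ i / (i ! : ℝ) * iteratedDeriv i f x₀ := by
  rw [taylor_within_apply]
  refine Finset.sum_congr rfl fun i hi => ?_
  have hin : (i : WithTop ℕ∞) ≤ n := by exact_mod_cast Finset.mem_range_succ_iff.mp hi
  rw [iteratedDerivWithin_eq_iteratedDeriv hs (hf.of_le hin).contDiffAt hx₀, smul_eq_mul]
  ring

theorem abs_sub_sum_iteratedDeriv_le {f : ℝ → ℝ} {n : ℕ} (hf : ContDiff ℝ (n + 1) f)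
    {a b M : ℝ} (hab : a < b) (hM : ∀ x ∈ Icc a b, |iteratedDeriv (n + 1) f x| ≤ M) :
    |f b - ∑ i ∈ Finset.range (n + 1), (b - a) ^ i / (i ! : ℝ) * iteratedDeriv i f a|
      ≤ M * (b - a) ^ (n + 1) / ((n + 1)! : ℝ) := by
  obtain ⟨c, hc, hlagrange⟩ :=
    taylor_mean_remainder_lagrange_iteratedDeriv hab.ne hf.contDiffOn
  rw [uIcc_of_le hab.le] at hlagrange
  rw [uIoo_of_le hab.le] at hc
  rw [← taylorWithinEval_eq_sum_iteratedDeriv (hf.of_le (by norm_cast; omega))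
    (uniqueDiffOn_Icc hab) (left_mem_Icc.mpr hab.le), hlagrange, abs_div, abs_mul,
    abs_of_nonneg (pow_nonneg (sub_nonneg.mpr hab.le) _), Nat.abs_cast]
  gcongr
  exact hM c (Ioo_subset_Icc_self hc)

/-- One-dimensional jump-corrected Taylor expansion underlying the explicit jump
immersed interface discretization: `xs` is an interfacial point between the grid
points `xi` and `xip1`. -/
theorem jump_corrected_taylor_one_dim
    (k : ℕ) (xi xs xip1 : ℝ) (hx1 : xi < xs) (hx2 : xs < xip1)
    (h : ℝ) (hh : h = xip1 - xi)
    (hp : ℝ) (hhp : hp = xip1 - xs)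
    (um up : ℝ → ℝ)
    (hum : ContDiff ℝ (k + 1) um)
    (hup : ContDiff ℝ (k + 1) up)
    (K : ℝ)
    (hKm : ∀ x ∈ Set.Icc xi xip1, |iteratedDeriv (k + 1) um x| ≤ K)
    (hKp : ∀ x ∈ Set.Icc xi xip1, |iteratedDeriv (k + 1) up x| ≤ K) :
    |up xip1
      - ∑ p ∈ Finset.range (k + 1), h ^ p / (p.factorial : ℝ) * iteratedDeriv p um xi
      - ∑ r ∈ Finset.range (k + 1),
          hp ^ r / (r.factorial : ℝ) * (iteratedDeriv r up xs - iteratedDeriv r um xs)|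
    ≤ 3 * K * h ^ (k + 1) / ((k + 1).factorial : ℝ) := by
  subst hh hhp
  have hsub : Icc xs xip1 ⊆ Icc xi xip1 := Icc_subset_Icc_left hx1.le
  have hK : 0 ≤ K := (abs_nonneg _).trans (hKm xi (left_mem_Icc.mpr (hx1.trans hx2).le))
  have hbound_mono : K * (xip1 - xs) ^ (k + 1) / ((k + 1)! : ℝ) ≤
      K * (xip1 - xi) ^ (k + 1) / ((k + 1)! : ℝ) := by gcongr
  have hTp := abs_sub_sum_iteratedDeriv_le hup hx2 fun x hx => hKp x (hsub hx)
  have hTm := abs_sub_sum_iteratedDeriv_le hum hx2 fun x hx => hKm x (hsub hx)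
  have hT := abs_sub_sum_iteratedDeriv_le hum (hx1.trans hx2) hKm
  simp only [mul_sub, Finset.sum_sub_distrib]
  rw [mul_assoc, mul_div_assoc, abs_le]
  rw [abs_le] at hTp hTm hT
  constructor <;> linarith [hTp.1, hTp.2, hTm.1, hTm.2, hT.1, hT.2]
end

section
/- Let δ > 0 and h > 0, let a be a real number, and let f : ℝ → ℝ be of class C³ on the interval [a, a + δ + h], with |f'''(x)| ≤ M₃ for all x in [a, a + δ + h]. Then | (2/(h δ (δ + h))) · ( h f(a) − (δ + h) f(a + δ) + δ f(a + δ + h) ) − f''(a) | ≤ (δ + h) · M₃. -/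
/-!
Subtracting from `f` its quadratic interpolant at the three nodes leaves a function with three
zeros, so Rolle's theorem applied twice shows that the stencil, which is twice the second divided
difference, equals `f''(ξ)` for some `ξ ∈ (a, a + δ + h)`. The mean value theorem for `f''` then
bounds `|f''(ξ) - f''(a)|` by `M₃ |ξ - a| ≤ M₃ (δ + h)`.
-/

open Set Topology

noncomputable def secondDividedDifference (f : ℝ → ℝ) (x₀ x₁ x₂ : ℝ) : ℝ :=
  ((f x₂ - f x₁) / (x₂ - x₁) - (f x₁ - f x₀) / (x₁ - x₀)) / (x₂ - x₀)

theorem exists_second_hasDerivAt_eq_zero {g g' g'' : ℝ → ℝ} {x₀ x₁ x₂ : ℝ}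
    (h₀₁ : x₀ < x₁) (h₁₂ : x₁ < x₂) (hgc : ContinuousOn g (Icc x₀ x₂))
    (hg : ∀ x ∈ Ioo x₀ x₂, HasDerivAt g (g' x) x)
    (hg' : ∀ x ∈ Ioo x₀ x₂, HasDerivAt g' (g'' x) x)
    (h₀ : g x₀ = g x₁) (h₂ : g x₁ = g x₂) :
    ∃ ξ ∈ Ioo x₀ x₂, g'' ξ = 0 := by
  obtain ⟨y₁, hy₁, hgy₁⟩ := exists_hasDerivAt_eq_zero h₀₁
    (hgc.mono (Icc_subset_Icc_right h₁₂.le)) h₀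
    fun x hx => hg x (Ioo_subset_Ioo_right h₁₂.le hx)
  obtain ⟨y₂, hy₂, hgy₂⟩ := exists_hasDerivAt_eq_zero h₁₂
    (hgc.mono (Icc_subset_Icc_left h₀₁.le)) h₂
    fun x hx => hg x (Ioo_subset_Ioo_left h₀₁.le hx)
  have hsub : Icc y₁ y₂ ⊆ Ioo x₀ x₂ := Icc_subset_Ioo hy₁.1 hy₂.2
  obtain ⟨ξ, hξ, hg''ξ⟩ := exists_hasDerivAt_eq_zero (hy₁.2.trans hy₂.1)
    (fun x hx => (hg' x (hsub hx)).continuousAt.continuousWithinAt) (hgy₁.trans hgy₂.symm)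
    fun x hx => hg' x (hsub (Ioo_subset_Icc_self hx))
  exact ⟨ξ, hsub (Ioo_subset_Icc_self hξ), hg''ξ⟩

theorem exists_two_mul_secondDividedDifference_eq {f f' f'' : ℝ → ℝ} {x₀ x₁ x₂ : ℝ}
    (h₀₁ : x₀ < x₁) (h₁₂ : x₁ < x₂) (hfc : ContinuousOn f (Icc x₀ x₂))
    (hf : ∀ x ∈ Ioo x₀ x₂, HasDerivAt f (f' x) x)
    (hf' : ∀ x ∈ Ioo x₀ x₂, HasDerivAt f' (f'' x) x) :
    ∃ ξ ∈ Ioo x₀ x₂, 2 * secondDividedDifference f x₀ x₁ x₂ = f'' ξ := by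
  set s := (f x₁ - f x₀) / (x₁ - x₀)
  set d := secondDividedDifference f x₀ x₁ x₂
  -- the quadratic interpolant of `f` at `x₀, x₁, x₂`, in Newton form
  set p : ℝ → ℝ := fun x => f x₀ + s * (x - x₀) + d * ((x - x₀) * (x - x₁))
  have hp : ∀ x, HasDerivAt p (s + d * (2 * x - x₀ - x₁)) x := fun x =>
    ((((hasDerivAt_id' x).sub_const x₀).const_mul s).const_add (f x₀) |>.add
      ((((hasDerivAt_id' x).sub_const x₀).mul ((hasDerivAt_id' x).sub_const x₁)).const_mul d)
      ).congr_deriv (by ring)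
  have hp' : ∀ x, HasDerivAt (fun x => s + d * (2 * x - x₀ - x₁)) (2 * d) x := fun x =>
    ((((((hasDerivAt_id' x).const_mul 2).sub_const x₀).sub_const x₁).const_mul d).const_add s
      ).congr_deriv (by ring)
  have hx₀₁ : x₁ - x₀ ≠ 0 := sub_ne_zero.2 h₀₁.ne'
  have hx₁₂ : x₂ - x₁ ≠ 0 := sub_ne_zero.2 h₁₂.ne'
  have hx₀₂ : x₂ - x₀ ≠ 0 := sub_ne_zero.2 (h₀₁.trans h₁₂).ne'
  obtain ⟨ξ, hξ, hξ0⟩ := exists_second_hasDerivAt_eq_zero (g := f - p) h₀₁ h₁₂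
    (hfc.sub fun x _ => (hp x).continuousAt.continuousWithinAt)
    (fun x hx => (hf x hx).sub (hp x)) (fun x hx => (hf' x hx).sub (hp' x))
    (by simp only [Pi.sub_apply, p, s]; field_simp; ring)
    (by simp only [Pi.sub_apply, p, s, d, secondDividedDifference]; field_simp; ring)
  exact ⟨ξ, hξ, (sub_eq_zero.1 hξ0).symm⟩

theorem ContDiffOn.hasDerivAt_iteratedDerivWithin {𝕜 F : Type*} [NontriviallyNormedField 𝕜]
    [NormedAddCommGroup F] [NormedSpace 𝕜 F] {f : 𝕜 → F} {s : Set 𝕜} {n : WithTop ℕ∞} {m : ℕ}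
    {x : 𝕜} (hf : ContDiffOn 𝕜 n f s)
    (hmn : m < n) (hs : UniqueDiffOn 𝕜 s) (hx : s ∈ 𝓝 x) :
    HasDerivAt (iteratedDerivWithin m f s) (iteratedDerivWithin (m + 1) f s x) x := by
  have hd := ((hf.differentiableOn_iteratedDerivWithin hmn hs) x
    (mem_of_mem_nhds hx)).differentiableAt hx
  rw [iteratedDerivWithin_succ, hd.derivWithin (hs x (mem_of_mem_nhds hx))]
  exact hd.hasDerivAt

theorem ContDiffOn.norm_iteratedDerivWithin_sub_le {𝕜 F : Type*} [RCLike 𝕜]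
    [NormedAddCommGroup F] [NormedSpace 𝕜 F] {f : 𝕜 → F} {s : Set 𝕜} {m : ℕ} {C : ℝ}
    {x y : 𝕜} (hf : ContDiffOn 𝕜 (m + 1) f s) (hs : UniqueDiffOn 𝕜 s) (hconv : Convex ℝ s)
    (bound : ∀ z ∈ s, ‖iteratedDerivWithin (m + 1) f s z‖ ≤ C) (hx : x ∈ s) (hy : y ∈ s) :
    ‖iteratedDerivWithin m f s y - iteratedDerivWithin m f s x‖ ≤ C * ‖y - x‖ :=
  hconv.norm_image_sub_le_of_norm_derivWithin_le
    (hf.differentiableOn_iteratedDerivWithin (by exact_mod_cast m.lt_succ_self) hs)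
    (fun z hz => by simpa only [iteratedDerivWithin_succ] using bound z hz) hx hy

/-- Error bound for the one-sided finite-difference approximation of the second
derivative on the nonuniform three-point stencil `{a, a + δ, a + δ + h}`. -/
theorem one_sided_second_derivative_nonuniform
    (δ h a : ℝ) (hδ : 0 < δ) (hh : 0 < h)
    (f : ℝ → ℝ) (hf : ContDiffOn ℝ 3 f (Set.Icc a (a + δ + h)))
    (M₃ : ℝ)
    (hM : ∀ x ∈ Set.Icc a (a + δ + h),
      |iteratedDerivWithin 3 f (Set.Icc a (a + δ + h)) x| ≤ M₃) :
    |(2 / (h * δ * (δ + h))) *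
        (h * f a - (δ + h) * f (a + δ) + δ * f (a + δ + h))
      - iteratedDerivWithin 2 f (Set.Icc a (a + δ + h)) a|
    ≤ (δ + h) * M₃ := by
  set s := Icc a (a + δ + h)
  have hab : a < a + δ + h := by linarith
  have hs : UniqueDiffOn ℝ s := uniqueDiffOn_Icc hab
  have hderiv : ∀ m < 3, ∀ x ∈ Ioo a (a + δ + h),
      HasDerivAt (iteratedDerivWithin m f s) (iteratedDerivWithin (m + 1) f s x) x :=
    fun m hm x hx => hf.hasDerivAt_iteratedDerivWithin (by exact_mod_cast hm) hs
      (Icc_mem_nhds hx.1 hx.2)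
  obtain ⟨ξ, hξ, hξeq⟩ := exists_two_mul_secondDividedDifference_eq
    (x₁ := a + δ) (by linarith) (by linarith) hf.continuousOn
    (by simpa only [iteratedDerivWithin_zero] using hderiv 0 (by norm_num))
    (hderiv 1 (by norm_num))
  have hstencil : 2 / (h * δ * (δ + h)) * (h * f a - (δ + h) * f (a + δ) + δ * f (a + δ + h))
      = 2 * secondDividedDifference f a (a + δ) (a + δ + h) := by
    rw [secondDividedDifference, show a + δ + h - (a + δ) = h by ring,
      show a + δ - a = δ by ring, show a + δ + h - a = δ + h by ring]
    field_simp
    ring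
  have hmvt := hf.norm_iteratedDerivWithin_sub_le (m := 2) hs (convex_Icc _ _)
    (fun z hz => (Real.norm_eq_abs _).trans_le (hM z hz)) (left_mem_Icc.2 hab.le)
    (Ioo_subset_Icc_self hξ)
  rw [hstencil, hξeq]
  calc |iteratedDerivWithin 2 f s ξ - iteratedDerivWithin 2 f s a|
      ≤ M₃ * |ξ - a| := hmvt
    _ ≤ M₃ * (δ + h) := by
      gcongr
      · exact (abs_nonneg _).trans (hM a (left_mem_Icc.2 hab.le))
      · rw [abs_of_pos (sub_pos.2 hξ.1)]; linarith [hξ.2]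
    _ = (δ + h) * M₃ := mul_comm _ _
end

section
/- Let h > 0, let x be a real number, and let f : ℝ → ℝ be of class C⁴ on [x, x + 3h], with |f''''(t)| ≤ M₄ for all t in [x, x + 3h]. Then | (1/h²) · ( 2 f(x) − 5 f(x + h) + 4 f(x + 2h) − f(x + 3h) ) − f''(x) | ≤ (25/4) h² M₄. -/
/-!
Subtract from each sample `f (x + k * h)` the cubic Taylor polynomial of `f` at `x`. The stencil
`(2, -5, 4, -1)` annihilates `1`, `t` and `t ^ 3` and maps `t ^ 2 / 2` to `h ^ 2`, so the error is
`(-5 R₁ + 4 R₂ - R₃) / h ^ 2` with `R_k` the Taylor remainders. By the Lagrange form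
`|R_k| ≤ M₄ (k h) ^ 4 / 24`, and `(5 + 4 · 16 + 81) / 24 = 25 / 4`.
-/

open Set Filter Topology

theorem iteratedDerivWithin_Icc_eq_of_lt {E : Type*} [NormedAddCommGroup E] [NormedSpace ℝ E]
    {f : ℝ → E} {a b B p : ℝ} (hbB : b ≤ B) (hp : p < b) (n : ℕ) :
    iteratedDerivWithin n f (Icc a b) p = iteratedDerivWithin n f (Icc a B) p := by
  have hloc : Icc a b =ᶠ[𝓝 p] Icc a B := by
    rw [eventuallyEq_set]
    filter_upwards [Iio_mem_nhds hp] with y hy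
    exact ⟨fun hy' => ⟨hy'.1, hy'.2.trans hbB⟩, fun hy' => ⟨hy'.1, hy.le⟩⟩
  simp only [iteratedDerivWithin_eq_iteratedFDerivWithin, iteratedFDerivWithin_congr_set hloc]

theorem taylorWithinEval_Icc_eq_of_lt {E : Type*} [NormedAddCommGroup E] [NormedSpace ℝ E]
    {f : ℝ → E} {a b B : ℝ} (hab : a < b) (hbB : b ≤ B) (n : ℕ) (x : ℝ) :
    taylorWithinEval f n (Icc a b) a x = taylorWithinEval f n (Icc a B) a x := by
  simp only [taylor_within_apply, iteratedDerivWithin_Icc_eq_of_lt hbB hab]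

/-- Unlike `taylor_mean_remainder_bound`, the Lagrange form gives the sharp factor
`1 / (n + 1)!`. -/
theorem abs_sub_taylorWithinEval_le {f : ℝ → ℝ} {a b B C : ℝ} {n : ℕ} (hab : a < b)
    (hbB : b ≤ B) (hf : ContDiffOn ℝ (n + 1) f (Icc a B))
    (hC : ∀ y ∈ Icc a B, |iteratedDerivWithin (n + 1) f (Icc a B) y| ≤ C) :
    |f b - taylorWithinEval f n (Icc a B) a b| ≤ C * (b - a) ^ (n + 1) / (n + 1).factorial := by
  have hfb : ContDiffOn ℝ (n + 1) f (Icc a b) := hf.mono (Icc_subset_Icc_right hbB)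
  have hdiff : DifferentiableOn ℝ (iteratedDerivWithin n f (Icc a b)) (Icc a b) :=
    hfb.differentiableOn_iteratedDerivWithin (mod_cast n.lt_succ_self) (uniqueDiffOn_Icc hab)
  obtain ⟨c, hc, hlagrange⟩ := taylor_mean_remainder_lagrange (n := n) hab.ne
    (by rw [uIcc_of_le hab.le]; exact hfb.of_succ)
    (by rw [uIcc_of_le hab.le, uIoo_of_le hab.le]; exact hdiff.mono Ioo_subset_Icc_self)
  rw [uIoo_of_le hab.le] at hc
  rw [uIcc_of_le hab.le, taylorWithinEval_Icc_eq_of_lt hab hbB,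
    iteratedDerivWithin_Icc_eq_of_lt hbB hc.2] at hlagrange
  rw [hlagrange, abs_div, abs_mul, abs_pow, abs_of_pos (sub_pos.2 hab), Nat.abs_cast]
  gcongr
  exact hC c ⟨hc.1.le, hc.2.le.trans hbB⟩

theorem taylorWithinEval_three (f : ℝ → ℝ) (s : Set ℝ) (a b : ℝ) :
    taylorWithinEval f 3 s a b = f a + (b - a) * iteratedDerivWithin 1 f s a
      + (b - a) ^ 2 / 2 * iteratedDerivWithin 2 f s a
      + (b - a) ^ 3 / 6 * iteratedDerivWithin 3 f s a := by
  simp only [taylor_within_apply, Finset.sum_range_succ, Finset.sum_range_zero,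
    iteratedDerivWithin_zero, smul_eq_mul]
  norm_num [Nat.factorial]
  ring

theorem four_point_stencil_sub_eq (f : ℝ → ℝ) (s : Set ℝ) {x h : ℝ} (hh : h ≠ 0) :
    let T := taylorWithinEval f 3 s x
    (1 / h ^ 2) * (2 * f x - 5 * f (x + h) + 4 * f (x + 2 * h) - f (x + 3 * h))
        - iteratedDerivWithin 2 f s x
      = (-5 * (f (x + h) - T (x + h)) + 4 * (f (x + 2 * h) - T (x + 2 * h))
          - (f (x + 3 * h) - T (x + 3 * h))) / h ^ 2 := by
  simp only [taylorWithinEval_three]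
  field_simp
  ring

/-- Error bound for the uniform-grid one-sided four-point approximation of the second
derivative, used to compute the vorticity at the first irregular node next to the
interface. -/
theorem one_sided_second_derivative_uniform_four_point
    (h x : ℝ) (hh : 0 < h)
    (f : ℝ → ℝ) (hf : ContDiffOn ℝ 4 f (Set.Icc x (x + 3 * h)))
    (M₄ : ℝ)
    (hM : ∀ t ∈ Set.Icc x (x + 3 * h),
      |iteratedDerivWithin 4 f (Set.Icc x (x + 3 * h)) t| ≤ M₄) :
    |(1 / h ^ 2) *
        (2 * f x - 5 * f (x + h) + 4 * f (x + 2 * h) - f (x + 3 * h))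
      - iteratedDerivWithin 2 f (Set.Icc x (x + 3 * h)) x|
    ≤ 25 / 4 * h ^ 2 * M₄ := by
  rw [four_point_stencil_sub_eq f _ hh.ne', abs_div, abs_of_pos (pow_pos hh 2),
    div_le_iff₀ (pow_pos hh 2)]
  set T := taylorWithinEval f 3 (Icc x (x + 3 * h)) x
  have remainder (k : ℝ) (hk : 0 < k) (hk3 : k ≤ 3) :
      |f (x + k * h) - T (x + k * h)| ≤ M₄ * (k * h) ^ 4 / 24 := by
    have := abs_sub_taylorWithinEval_le (n := 3) (b := x + k * h)
      (lt_add_of_pos_right x (mul_pos hk hh)) (by gcongr) hf hM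
    convert this using 2 <;> norm_num [Nat.factorial]
  have hR₁ := remainder 1 one_pos (by norm_num)
  have hR₂ := remainder 2 two_pos (by norm_num)
  have hR₃ := remainder 3 three_pos le_rfl
  simp only [one_mul] at hR₁
  calc _ ≤ 5 * |f (x + h) - T (x + h)| + 4 * |f (x + 2 * h) - T (x + 2 * h)|
          + |f (x + 3 * h) - T (x + 3 * h)| := by
        refine (abs_sub _ _).trans ?_
        gcongr
        refine (abs_add_le _ _).trans_eq ?_
        simp only [abs_mul]
        norm_num
    _ ≤ 5 * (M₄ * h ^ 4 / 24) + 4 * (M₄ * (2 * h) ^ 4 / 24) + M₄ * (3 * h) ^ 4 / 24 := by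
        gcongr
    _ = 25 / 4 * h ^ 2 * M₄ * h ^ 2 := by ring
end
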